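/- Let A ∈ ℝ^{n×n}, ε ∈ (0,1), and Ã = A + D with ‖D‖_2 ≤ (ε/(3n))·σ_{k+1}(A). Let Q ∈ ℝ^{n×k} have orthonormal columns. If ‖Ã − QQᵀÃ‖_2 ≤ (1+ε)·‖Ã − Ã_k‖_2, then ‖A − QQᵀA‖_2 ≤ (1+2ε)·‖A − A_k‖_2. -/

import Mathlib

open MeasureTheory ProbabilityTheory Matrix

noncomputable section

/-- Euclidean (ℓ₂) norm of a vector. -/
def l2norm {n : ℕ} (v : Fin n → ℝ) : ℝ := Real.sqrt (∑ i, v i ^ 2)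

/-- Spectral (ℓ₂ operator) norm of a matrix. -/
def specNorm {n d : ℕ} (M : Matrix (Fin n) (Fin d) ℝ) : ℝ :=
  sSup {c : ℝ | ∃ v : Fin d → ℝ, l2norm v ≤ 1 ∧ c = l2norm (M.mulVec v)}

/-- Frobenius norm of a matrix. -/
def frobNorm {n d : ℕ} (M : Matrix (Fin n) (Fin d) ℝ) : ℝ :=
  Real.sqrt (∑ i, ∑ j, M i j ^ 2)

/-- Column span of a matrix. -/
def colSpan {n : ℕ} {m : Type*} (M : Matrix (Fin n) m ℝ) : Submodule ℝ (Fin n → ℝ) :=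
  Submodule.span ℝ (Set.range fun j i => M i j)

/-- `IsSVD A U V σ` : `A = U Σ Vᵀ` is a singular value decomposition of `A`, where
`σ 0 ≥ σ 1 ≥ … ≥ 0` are the singular values (0-indexed, `σ i = 0` for `i ≥ min n d`). -/
def IsSVD {n d : ℕ} (A : Matrix (Fin n) (Fin d) ℝ) (U : Matrix (Fin n) (Fin n) ℝ)
    (V : Matrix (Fin d) (Fin d) ℝ) (σ : ℕ → ℝ) : Prop :=
  Uᵀ * U = 1 ∧ Vᵀ * V = 1 ∧
  (∀ i j : ℕ, i ≤ j → σ j ≤ σ i) ∧ (∀ i, 0 ≤ σ i) ∧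
  (∀ i, min n d ≤ i → σ i = 0) ∧
  A = U * (Matrix.of fun (i : Fin n) (j : Fin d) => if (i : ℕ) = (j : ℕ) then σ (i : ℕ) else 0) * Vᵀ

/-- The first `k` columns of a square matrix `U` (e.g. the top-`k` left singular vectors). -/
def topCols {n k : ℕ} (U : Matrix (Fin n) (Fin n) ℝ) (hk : k ≤ n) :
    Matrix (Fin n) (Fin k) ℝ :=
  Matrix.of fun i j => U i (Fin.castLE hk j)

/-- The best rank-`k` approximation `A_k = U_k U_kᵀ A` of `A`. -/
def rankApprox {n d : ℕ} (k : ℕ) (A : Matrix (Fin n) (Fin d) ℝ)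
    (U : Matrix (Fin n) (Fin n) ℝ) (hk : k ≤ n) : Matrix (Fin n) (Fin d) ℝ :=
  topCols U hk * (topCols U hk)ᵀ * A

/-- The law of a vector in `ℝⁿ` with i.i.d. standard Gaussian entries. -/
def stdGaussian (n : ℕ) : Measure (Fin n → ℝ) :=
  Measure.pi fun _ => gaussianReal 0 1

/-- The law of an `n × b` matrix with i.i.d. standard Gaussian entries. -/
def stdGaussianMat (n b : ℕ) : Measure (Fin n → Fin b → ℝ) :=
  Measure.pi fun _ => Measure.pi fun _ => gaussianReal 0 1

/-- `U'` consists of `k` top (unit-norm, mutually orthogonal) eigenvectors of the symmetric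
matrix `M`: the first `k` columns of an orthogonal eigenbasis whose eigenvalues are sorted
in decreasing order. -/
def IsTopEigenvectors {m k : ℕ} (M : Matrix (Fin m) (Fin m) ℝ)
    (U' : Matrix (Fin m) (Fin k) ℝ) : Prop :=
  ∃ (W : Matrix (Fin m) (Fin m) ℝ) (μ : Fin m → ℝ) (hk : k ≤ m),
    Wᵀ * W = 1 ∧ (∀ i j : Fin m, i ≤ j → μ j ≤ μ i) ∧
    M = W * Matrix.diagonal μ * Wᵀ ∧
    U' = Matrix.of fun i j => W i (Fin.castLE hk j)

/-- `Q` is a possible output of the single vector Krylov method (Algorithm 1) on `A` with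
target rank `k`, starting vector `x` and `t` iterations. -/
def IsKrylovOutput {n d k : ℕ} (A : Matrix (Fin n) (Fin d) ℝ) (t : ℕ)
    (x : Fin n → ℝ) (Q : Matrix (Fin n) (Fin k) ℝ) : Prop :=
  ∃ (m : ℕ) (Z : Matrix (Fin n) (Fin m) ℝ) (U' : Matrix (Fin m) (Fin k) ℝ),
    Zᵀ * Z = 1 ∧
    colSpan Z = Submodule.span ℝ
      {v : Fin n → ℝ | ∃ j ≤ t, v = ((A * Aᵀ) ^ j).mulVec x} ∧
    IsTopEigenvectors (Zᵀ * (A * Aᵀ) * Z) U' ∧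
    Q = Z * U'

/-- `Q` is a possible output of the block Krylov method (Algorithm 2) on `A` with
target rank `k`, starting block `B` and `t` iterations. -/
def IsBlockKrylovOutput {n d k b : ℕ} (A : Matrix (Fin n) (Fin d) ℝ) (t : ℕ)
    (B : Matrix (Fin n) (Fin b) ℝ) (Q : Matrix (Fin n) (Fin k) ℝ) : Prop :=
  ∃ (m : ℕ) (Z : Matrix (Fin n) (Fin m) ℝ) (U' : Matrix (Fin m) (Fin k) ℝ),
    Zᵀ * Z = 1 ∧
    colSpan Z = Submodule.span ℝ
      {v : Fin n → ℝ | ∃ j ≤ t, ∃ c : Fin b, v = ((A * Aᵀ) ^ j).mulVec (fun i => B i c)} ∧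
    IsTopEigenvectors (Zᵀ * (A * Aᵀ) * Z) U' ∧
    Q = Z * U'

/-- `Q` is a possible output of single vector simultaneous iteration on `A` with
target rank `k`, starting vector `x`, `t` iterations, and memory budget `ℓ`. -/
def IsSimIterOutput {n d k : ℕ} (A : Matrix (Fin n) (Fin d) ℝ) (t ℓ : ℕ)
    (x : Fin n → ℝ) (Q : Matrix (Fin n) (Fin k) ℝ) : Prop :=
  ∃ (m : ℕ) (Z : Matrix (Fin n) (Fin m) ℝ) (U' : Matrix (Fin m) (Fin k) ℝ),
    Zᵀ * Z = 1 ∧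
    colSpan Z = Submodule.span ℝ
      {v : Fin n → ℝ | ∃ j, t - ℓ + 1 ≤ j ∧ j ≤ t ∧ v = ((A * Aᵀ) ^ j).mulVec x} ∧
    IsTopEigenvectors (Zᵀ * (A * Aᵀ) * Z) U' ∧
    Q = Z * U'

/-- `B` is a `(k,L)`-good starting matrix for a matrix with top-`k` left singular
vectors `Uk` (Definition 2.1 / `def:lgood`). -/
def IsGoodStart {n k : ℕ} (Uk : Matrix (Fin n) (Fin k) ℝ)
    (B : Matrix (Fin n) (Fin k) ℝ) (L : ℝ) : Prop :=
  ∃ Q : Matrix (Fin n) (Fin k) ℝ, Qᵀ * Q = 1 ∧ colSpan Q = colSpan B ∧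
    IsUnit (Ukᵀ * Q) ∧ specNorm ((Ukᵀ * Q)⁻¹) ^ 2 ≤ L

/-- Generalized `(k,L)`-good starting matrix (Definition `def:lgood-small-block`):
`B` may have any number of columns; some orthonormal `Q` with columns inside the column
span of `B` has `UkᵀQ` invertible with `‖(UkᵀQ)⁻¹‖₂² ≤ L`. -/
def IsGoodStartGen {n k : ℕ} {m : Type*} [Fintype m] (Uk : Matrix (Fin n) (Fin k) ℝ)
    (B : Matrix (Fin n) m ℝ) (L : ℝ) : Prop :=
  ∃ Q : Matrix (Fin n) (Fin k) ℝ, Qᵀ * Q = 1 ∧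
    (∀ j : Fin k, (fun i => Q i j) ∈ colSpan B) ∧
    IsUnit (Ukᵀ * Q) ∧ specNorm ((Ukᵀ * Q)⁻¹) ^ 2 ≤ L

/-- Schatten `p`-norm of a matrix: `(∑ i σ_i(M)^p)^(1/p)`, where the singular values are
the square roots of the eigenvalues of `M Mᵀ`. -/
def schattenNorm {n d : ℕ} (M : Matrix (Fin n) (Fin d) ℝ) (p : ℝ) : ℝ :=
  (∑ i, Real.sqrt ((Matrix.isHermitian_mul_conjTranspose_self M).eigenvalues i) ^ p) ^ (1 / p)


def toE {n d : ℕ} (M : Matrix (Fin n) (Fin d) ℝ) :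
    EuclideanSpace ℝ (Fin d) →L[ℝ] EuclideanSpace ℝ (Fin n) :=
  LinearMap.toContinuousLinearMap (Matrix.toEuclideanLin M)

lemma l2norm_eq_norm {n : ℕ} (v : Fin n → ℝ) :
    l2norm v = ‖(WithLp.equiv 2 (Fin n → ℝ)).symm v‖ := by
  rw [EuclideanSpace.norm_eq, l2norm]
  congr 1; apply Finset.sum_congr rfl; intro i _
  simp [Real.norm_eq_abs, sq_abs]

lemma specNorm_eq {n d : ℕ} (M : Matrix (Fin n) (Fin d) ℝ) : specNorm M = ‖toE M‖ := by
  rw [← ContinuousLinearMap.sSup_unitClosedBall_eq_norm (toE M)]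
  have hset : {c : ℝ | ∃ v : Fin d → ℝ, l2norm v ≤ 1 ∧ c = l2norm (M.mulVec v)} =
      (fun x => ‖toE M x‖) '' Metric.closedBall 0 1 := by
    ext c
    constructor
    · rintro ⟨v, hv, rfl⟩
      refine ⟨(WithLp.equiv 2 (Fin d → ℝ)).symm v, ?_, ?_⟩
      · rwa [Metric.mem_closedBall, dist_zero_right, ← l2norm_eq_norm]
      · rw [l2norm_eq_norm]; rfl
    · rintro ⟨x, hx, rfl⟩
      refine ⟨WithLp.equiv 2 (Fin d → ℝ) x, ?_, ?_⟩
      · rw [l2norm_eq_norm]; simpa [Metric.mem_closedBall, dist_zero_right] using hx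
      · rw [l2norm_eq_norm]; rfl
  rw [specNorm, hset]


lemma l2norm_eq_norm' {n : ℕ} (v : Fin n → ℝ) :
    l2norm v = ‖(WithLp.equiv 2 (Fin n → ℝ)).symm v‖ := by
  rw [EuclideanSpace.norm_eq, l2norm]
  congr 1; apply Finset.sum_congr rfl; intro i _
  simp [Real.norm_eq_abs, sq_abs]

lemma toE_apply {n d : ℕ} (M : Matrix (Fin n) (Fin d) ℝ) (v : Fin d → ℝ) :
    toE M ((WithLp.equiv 2 (Fin d → ℝ)).symm v) = (WithLp.equiv 2 (Fin n → ℝ)).symm (M.mulVec v) := rfl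

lemma norm_toE_apply {n d : ℕ} (M : Matrix (Fin n) (Fin d) ℝ) (v : Fin d → ℝ) :
    ‖toE M ((WithLp.equiv 2 (Fin d → ℝ)).symm v)‖ = l2norm (M.mulVec v) := by
  rw [toE_apply, l2norm_eq_norm']

lemma specNorm_nonneg {n d : ℕ} (M : Matrix (Fin n) (Fin d) ℝ) : 0 ≤ specNorm M := by
  rw [specNorm_eq]; exact norm_nonneg _

lemma toE_add {n d : ℕ} (M N : Matrix (Fin n) (Fin d) ℝ) : toE (M + N) = toE M + toE N := by
  ext v; simp [toE, map_add]

lemma toE_sub {n d : ℕ} (M N : Matrix (Fin n) (Fin d) ℝ) : toE (M - N) = toE M - toE N := by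
  ext v; simp [toE, map_sub]

lemma toE_mul {n d e : ℕ} (M : Matrix (Fin n) (Fin d) ℝ) (N : Matrix (Fin d) (Fin e) ℝ) :
    toE (M * N) = (toE M).comp (toE N) := by
  ext1 v
  show toEuclideanLin (M * N) v = toEuclideanLin M (toEuclideanLin N v)
  rw [Matrix.toEuclideanLin_apply, Matrix.toEuclideanLin_apply, Matrix.toEuclideanLin_apply]
  simp [Matrix.mulVec_mulVec]

lemma specNorm_add_le {n d : ℕ} (M N : Matrix (Fin n) (Fin d) ℝ) :
    specNorm (M + N) ≤ specNorm M + specNorm N := by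
  rw [specNorm_eq, specNorm_eq, specNorm_eq, toE_add]; exact norm_add_le _ _

lemma specNorm_mul_le {n d e : ℕ} (M : Matrix (Fin n) (Fin d) ℝ) (N : Matrix (Fin d) (Fin e) ℝ) :
    specNorm (M * N) ≤ specNorm M * specNorm N := by
  rw [specNorm_eq, specNorm_eq, specNorm_eq, toE_mul]
  exact ContinuousLinearMap.opNorm_comp_le _ _

lemma specNorm_le_of_bound {n d : ℕ} {M : Matrix (Fin n) (Fin d) ℝ} {C : ℝ} (hC : 0 ≤ C)
    (h : ∀ v : Fin d → ℝ, l2norm (M.mulVec v) ≤ C * l2norm v) : specNorm M ≤ C := by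
  rw [specNorm_eq]
  apply ContinuousLinearMap.opNorm_le_bound _ hC
  intro x
  have := h (WithLp.equiv 2 (Fin d → ℝ) x)
  rwa [l2norm_eq_norm', l2norm_eq_norm', (WithLp.equiv 2 (Fin d → ℝ)).symm_apply_apply,
    ← toE_apply, (WithLp.equiv 2 (Fin d → ℝ)).symm_apply_apply] at this

lemma le_specNorm {n d : ℕ} (M : Matrix (Fin n) (Fin d) ℝ) (v : Fin d → ℝ) (hv : l2norm v ≤ 1) :
    l2norm (M.mulVec v) ≤ specNorm M := by
  rw [specNorm_eq, ← norm_toE_apply]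
  apply ContinuousLinearMap.unit_le_opNorm
  rwa [← l2norm_eq_norm']


lemma l2norm_eq_sqrt_dot {n : ℕ} (v : Fin n → ℝ) : l2norm v = Real.sqrt (v ⬝ᵥ v) := by
  rw [l2norm, dotProduct]
  congr 1; exact Finset.sum_congr rfl fun i _ => sq (v i)

lemma l2norm_nonneg {n : ℕ} (v : Fin n → ℝ) : 0 ≤ l2norm v := Real.sqrt_nonneg _

lemma dot_self_nonneg {n : ℕ} (v : Fin n → ℝ) : 0 ≤ v ⬝ᵥ v :=
  Finset.sum_nonneg fun i _ => mul_self_nonneg _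

lemma sq_l2norm {n : ℕ} (v : Fin n → ℝ) : l2norm v ^ 2 = v ⬝ᵥ v := by
  rw [l2norm_eq_sqrt_dot, Real.sq_sqrt (dot_self_nonneg v)]

lemma dot_mulVec_mulVec {n d : ℕ} (M : Matrix (Fin n) (Fin d) ℝ) (x y : Fin d → ℝ) :
    (M.mulVec x) ⬝ᵥ (M.mulVec y) = x ⬝ᵥ ((Mᵀ * M).mulVec y) := by
  rw [Matrix.dotProduct_mulVec, Matrix.dotProduct_mulVec, ← Matrix.vecMul_vecMul,
    Matrix.vecMul_transpose]

lemma l2norm_mulVec_of_orth {n d : ℕ} {M : Matrix (Fin n) (Fin d) ℝ} (h : Mᵀ * M = 1)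
    (x : Fin d → ℝ) : l2norm (M.mulVec x) = l2norm x := by
  rw [l2norm_eq_sqrt_dot, l2norm_eq_sqrt_dot, dot_mulVec_mulVec, h, Matrix.one_mulVec]

lemma specNorm_orth_le_one {n d : ℕ} {M : Matrix (Fin n) (Fin d) ℝ} (h : Mᵀ * M = 1) :
    specNorm M ≤ 1 := by
  apply specNorm_le_of_bound zero_le_one
  intro v; rw [l2norm_mulVec_of_orth h, one_mul]

lemma specNorm_orth_mul {n d : ℕ} {P : Matrix (Fin n) (Fin n) ℝ} (h : Pᵀ * P = 1)
    (M : Matrix (Fin n) (Fin d) ℝ) : specNorm (P * M) = specNorm M := by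
  apply le_antisymm
  · calc specNorm (P * M) ≤ specNorm P * specNorm M := specNorm_mul_le _ _
    _ ≤ 1 * specNorm M := by
        apply mul_le_mul_of_nonneg_right (specNorm_orth_le_one h) (specNorm_nonneg M)
    _ = specNorm M := one_mul _
  · have hPt : (Pᵀ)ᵀ * Pᵀ = 1 := by
      rw [Matrix.transpose_transpose, mul_eq_one_comm.mp h]
    calc specNorm M = specNorm (Pᵀ * (P * M)) := by rw [← Matrix.mul_assoc, h, Matrix.one_mul]
    _ ≤ specNorm Pᵀ * specNorm (P * M) := specNorm_mul_le _ _
    _ ≤ 1 * specNorm (P * M) :=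
        mul_le_mul_of_nonneg_right (specNorm_orth_le_one hPt) (specNorm_nonneg _)
    _ = specNorm (P * M) := one_mul _

lemma specNorm_mul_orthT {n d : ℕ} {P : Matrix (Fin d) (Fin d) ℝ} (h : Pᵀ * P = 1)
    (M : Matrix (Fin n) (Fin d) ℝ) : specNorm (M * Pᵀ) = specNorm M := by
  have hPPt : P * Pᵀ = 1 := mul_eq_one_comm.mp h
  have hPt : (Pᵀ)ᵀ * Pᵀ = 1 := by rw [Matrix.transpose_transpose, hPPt]
  apply le_antisymm
  · calc specNorm (M * Pᵀ) ≤ specNorm M * specNorm Pᵀ := specNorm_mul_le _ _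
    _ ≤ specNorm M * 1 :=
        mul_le_mul_of_nonneg_left (specNorm_orth_le_one hPt) (specNorm_nonneg _)
    _ = specNorm M := mul_one _
  · calc specNorm M = specNorm (M * Pᵀ * P) := by rw [Matrix.mul_assoc, h, Matrix.mul_one]
    _ ≤ specNorm (M * Pᵀ) * specNorm P := specNorm_mul_le _ _
    _ ≤ specNorm (M * Pᵀ) * 1 :=
        mul_le_mul_of_nonneg_left (specNorm_orth_le_one h) (specNorm_nonneg _)
    _ = specNorm (M * Pᵀ) := mul_one _


-- (a) projection bound
lemma specNorm_proj_le_one {n k : ℕ} {Q : Matrix (Fin n) (Fin k) ℝ} (hQ : Qᵀ * Q = 1) :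
    specNorm ((1 : Matrix (Fin n) (Fin n) ℝ) - Q * Qᵀ) ≤ 1 := by
  set P : Matrix (Fin n) (Fin n) ℝ := Q * Qᵀ with hPdef
  set R : Matrix (Fin n) (Fin n) ℝ := 1 - P with hRdef
  have hRt : Rᵀ = R := by
    rw [hRdef, Matrix.transpose_sub, Matrix.transpose_one, hPdef, Matrix.transpose_mul,
      Matrix.transpose_transpose]
  have hPP : P * P = P := by
    rw [hPdef, Matrix.mul_assoc, ← Matrix.mul_assoc Qᵀ Q Qᵀ, hQ, Matrix.one_mul]
  have hRR : R * R = R := by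
    rw [hRdef]
    simp only [Matrix.sub_mul, Matrix.mul_sub, Matrix.one_mul, Matrix.mul_one, hPP]
    abel
  apply specNorm_le_of_bound zero_le_one
  intro v
  rw [one_mul, l2norm_eq_sqrt_dot, l2norm_eq_sqrt_dot]
  apply Real.sqrt_le_sqrt
  have h1 : (R.mulVec v) ⬝ᵥ (R.mulVec v) = v ⬝ᵥ (R.mulVec v) := by
    rw [dot_mulVec_mulVec, hRt, hRR]
  have h2 : v ⬝ᵥ v = v ⬝ᵥ (R.mulVec v) + v ⬝ᵥ (P.mulVec v) := by
    rw [← dotProduct_add, ← Matrix.add_mulVec]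
    have : R + P = 1 := by rw [hRdef]; abel
    rw [this, Matrix.one_mulVec]
  have h3 : 0 ≤ v ⬝ᵥ (P.mulVec v) := by
    have := dot_self_nonneg (Qᵀ.mulVec v)
    rwa [dot_mulVec_mulVec, Matrix.transpose_transpose] at this
  linarith

-- (b) diagonal norms
lemma if_diag_eq_diagonal {n : ℕ} (d : Fin n → ℝ) :
    (Matrix.of fun (i j : Fin n) => if (i : ℕ) = (j : ℕ) then d i else 0) = Matrix.diagonal d := by
  ext i j
  simp only [Matrix.of_apply, Matrix.diagonal_apply, Fin.val_eq_val]

lemma l2norm_smul_le {n : ℕ} (d : Fin n → ℝ) (v : Fin n → ℝ) {C : ℝ} (hC : 0 ≤ C)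
    (hd : ∀ i, |d i| ≤ C) :
    l2norm ((Matrix.diagonal d).mulVec v) ≤ C * l2norm v := by
  rw [l2norm, l2norm]
  have h1 : ∀ i, ((Matrix.diagonal d).mulVec v i) ^ 2 ≤ C ^ 2 * v i ^ 2 := by
    intro i
    rw [Matrix.mulVec_diagonal, mul_pow]
    apply mul_le_mul_of_nonneg_right _ (sq_nonneg _)
    rw [← sq_abs]
    exact pow_le_pow_left₀ (abs_nonneg _) (hd i) 2
  calc Real.sqrt (∑ i, ((Matrix.diagonal d).mulVec v i) ^ 2)
      ≤ Real.sqrt (∑ i, C ^ 2 * v i ^ 2) := by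
        apply Real.sqrt_le_sqrt; exact Finset.sum_le_sum fun i _ => h1 i
    _ = C * Real.sqrt (∑ i, v i ^ 2) := by
        rw [← Finset.mul_sum, Real.sqrt_mul (sq_nonneg C), Real.sqrt_sq hC]

lemma l2norm_single {n : ℕ} (i : Fin n) (c : ℝ) (hc : 0 ≤ c) :
    l2norm (Pi.single i c) = c := by
  rw [l2norm]
  have : ∑ j, (Pi.single i c j) ^ 2 = c ^ 2 := by
    rw [Finset.sum_eq_single i]
    · simp
    · intro b _ hb; rw [Pi.single_eq_of_ne hb]; ring
    · simp
  rw [this, Real.sqrt_sq hc]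

lemma diag_single_le_specNorm {n : ℕ} (d : Fin n → ℝ) (i : Fin n) (hd : 0 ≤ d i) :
    d i ≤ specNorm (Matrix.diagonal d) := by
  have h1 : l2norm (Pi.single i (1:ℝ)) ≤ 1 := by rw [l2norm_single i 1 zero_le_one]
  have := le_specNorm (Matrix.diagonal d) (Pi.single i 1) h1
  have h2 : (Matrix.diagonal d).mulVec (Pi.single i 1) = Pi.single i (d i) := by
    ext j
    rw [Matrix.mulVec_diagonal]
    by_cases hij : j = i
    · subst hij; simp
    · rw [Pi.single_eq_of_ne hij, Pi.single_eq_of_ne hij, mul_zero]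
  rwa [h2, l2norm_single i (d i) hd] at this


lemma topCols_mul_transpose {n k : ℕ} (U : Matrix (Fin n) (Fin n) ℝ) (hkn : k ≤ n) :
    topCols U hkn * (topCols U hkn)ᵀ =
      U * Matrix.diagonal (fun i : Fin n => if (i : ℕ) < k then (1:ℝ) else 0) * Uᵀ := by
  ext i j
  rw [Matrix.mul_apply, Matrix.mul_apply]
  simp only [Matrix.mul_diagonal, Matrix.transpose_apply, topCols, Matrix.of_apply]
  have hrhs : ∀ a : Fin n, U i a * (if (a : ℕ) < k then (1:ℝ) else 0) * U j a
      = if (a : ℕ) < k then U i a * U j a else 0 := by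
    intro a; split_ifs <;> ring
  rw [Finset.sum_congr rfl fun a _ => hrhs a, ← Finset.sum_filter]
  refine Finset.sum_bij' (i := fun (b : Fin k) _ => Fin.castLE hkn b)
    (j := fun (a : Fin n) ha => (⟨(a : ℕ), (Finset.mem_filter.mp ha).2⟩ : Fin k))
    ?_ ?_ ?_ ?_ ?_
  · intro b _
    simp [Fin.is_lt]
  · intro a _
    exact Finset.mem_univ _
  · intro b _
    apply Fin.ext
    rfl
  · intro a _
    apply Fin.ext
    rfl
  · intro b _
    rfl

lemma resid_eq {n k : ℕ} (hkn : k ≤ n) (U V : Matrix (Fin n) (Fin n) ℝ) (σ : ℕ → ℝ)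
    (hU : Uᵀ * U = 1)
    (A : Matrix (Fin n) (Fin n) ℝ)
    (hAeq : A = U * (Matrix.of fun (i j : Fin n) =>
      if (i : ℕ) = (j : ℕ) then σ (i : ℕ) else 0) * Vᵀ) :
    A - rankApprox k A U hkn =
      U * Matrix.diagonal (fun i : Fin n => if k ≤ (i : ℕ) then σ (i : ℕ) else 0) * Vᵀ := by
  set Sm : Matrix (Fin n) (Fin n) ℝ := Matrix.of fun (i j : Fin n) =>
    if (i : ℕ) = (j : ℕ) then σ (i : ℕ) else 0 with hSm
  have h1 : rankApprox k A U hkn =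
      U * (Matrix.diagonal (fun i : Fin n => if (i : ℕ) < k then (1:ℝ) else 0) * Sm) * Vᵀ := by
    rw [rankApprox, topCols_mul_transpose, hAeq]
    simp only [Matrix.mul_assoc]
    rw [← Matrix.mul_assoc Uᵀ U, hU, Matrix.one_mul]
  rw [h1, hAeq, ← Matrix.sub_mul, ← Matrix.mul_sub]
  congr 1
  congr 1
  ext i j
  rw [Matrix.sub_apply, Matrix.diagonal_mul]
  by_cases hij : i = j
  · subst hij
    simp only [Matrix.diagonal_apply_eq, hSm, Matrix.of_apply, if_pos rfl]
    by_cases hik : (i : ℕ) < k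
    · simp [hik, not_le.mpr hik]
    · simp [hik, not_lt.mp hik]
  · have hij' : ¬ (i : ℕ) = (j : ℕ) := fun h => hij (Fin.ext h)
    simp [Matrix.diagonal_apply_ne _ hij, hSm, hij']


lemma l2norm_smul {n : ℕ} (c : ℝ) (v : Fin n → ℝ) : l2norm (c • v) = |c| * l2norm v := by
  rw [l2norm, l2norm]
  have : ∑ i, (c • v) i ^ 2 = c ^ 2 * ∑ i, v i ^ 2 := by
    rw [Finset.mul_sum]; apply Finset.sum_congr rfl; intro i _; simp [mul_pow]
  rw [this, Real.sqrt_mul (sq_nonneg c), Real.sqrt_sq_eq_abs]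

lemma l2norm_pos {n : ℕ} {v : Fin n → ℝ} (hv : v ≠ 0) : 0 < l2norm v := by
  rw [l2norm]
  apply Real.sqrt_pos.mpr
  rcases Function.ne_iff.mp hv with ⟨i, hi⟩
  have : (0:ℝ) < v i ^ 2 := pow_two_pos_of_ne_zero hi
  exact lt_of_lt_of_le this (Finset.single_le_sum (f := fun i => v i ^ 2)
    (fun j _ => sq_nonneg _) (Finset.mem_univ i))

/-- weak Eckart-Young -/
lemma weakEY {n k : ℕ} (hkn : k < n) (At : Matrix (Fin n) (Fin n) ℝ)
    (Ut Vt : Matrix (Fin n) (Fin n) ℝ) (σt : ℕ → ℝ) (hUt : Utᵀ * Ut = 1) (hVt : Vtᵀ * Vt = 1)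
    (hmono : ∀ i j : ℕ, i ≤ j → σt j ≤ σt i) (hpos : ∀ i, 0 ≤ σt i)
    (hAt : At = Ut * (Matrix.of fun (i j : Fin n) =>
      if (i : ℕ) = (j : ℕ) then σt (i : ℕ) else 0) * Vtᵀ)
    (T : Matrix (Fin n) (Fin k) ℝ) (C : Matrix (Fin k) (Fin n) ℝ) :
    σt k ≤ specNorm (At - T * C) := by
  classical
  -- the kernel of C
  set g : (Fin n → ℝ) →ₗ[ℝ] (Fin k → ℝ) := Matrix.mulVecLin C with hg
  set N : Submodule ℝ (Fin n → ℝ) := LinearMap.ker g with hN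
  have hNrank : n - k ≤ Module.finrank ℝ N := by
    have h1 := LinearMap.finrank_range_add_finrank_ker g
    have h2 : Module.finrank ℝ (LinearMap.range g) ≤ k := by
      calc Module.finrank ℝ (LinearMap.range g) ≤ Module.finrank ℝ (Fin k → ℝ) :=
        Submodule.finrank_le _
      _ = k := by simp [Module.finrank_pi]
    have h3 : Module.finrank ℝ (Fin n → ℝ) = n := by simp [Module.finrank_pi]
    rw [h3] at h1
    show n - k ≤ Module.finrank ℝ (LinearMap.ker g)
    omega
  -- the span of the top k+1 right singular vectors
  set J : Matrix (Fin n) (Fin (k+1)) ℝ :=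
    Matrix.of fun i j => if (i : ℕ) = (j : ℕ) then 1 else 0 with hJ
  have hJorth : Jᵀ * J = 1 := by
    ext a b
    rw [Matrix.mul_apply]
    simp only [Matrix.transpose_apply, hJ, Matrix.of_apply]
    rw [Finset.sum_eq_single (Fin.castLE hkn a)]
    · simp [Matrix.one_apply, Fin.val_eq_val]
    · intro c _ hc
      have hca : ¬ ((c : ℕ) = (a : ℕ)) := fun h => hc (Fin.ext (by simpa using h))
      simp [hca]
    · simp
  -- the subspace W spanned by top k+1 right singular vectors
  set M' : Matrix (Fin n) (Fin (k+1)) ℝ := Vt * J with hM'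
  have hM'orth : M'ᵀ * M' = 1 := by
    rw [hM', Matrix.transpose_mul]
    simp only [Matrix.mul_assoc]
    rw [← Matrix.mul_assoc Vtᵀ Vt J, hVt, Matrix.one_mul, hJorth]
  set f : (Fin (k+1) → ℝ) →ₗ[ℝ] (Fin n → ℝ) := Matrix.mulVecLin M' with hf
  have hfinj : Function.Injective f := by
    intro x y hxy
    have h1 : M'ᵀ *ᵥ (M' *ᵥ x) = M'ᵀ *ᵥ (M' *ᵥ y) := by
      simp only [hf, Matrix.mulVecLin_apply] at hxy
      rw [hxy]
    simpa [Matrix.mulVec_mulVec, hM'orth, Matrix.one_mulVec] using h1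
  set W : Submodule ℝ (Fin n → ℝ) := LinearMap.range f with hW
  have hWrank : Module.finrank ℝ W = k + 1 := by
    show Module.finrank ℝ (LinearMap.range f) = k + 1
    rw [LinearMap.finrank_range_of_inj hfinj]
    simp [Module.finrank_pi]
  -- N ⊓ W nontrivial
  have hNW : ∃ v ∈ N ⊓ W, v ≠ 0 := by
    apply Submodule.exists_mem_ne_zero_of_ne_bot
    intro hbot
    have h0 : Module.finrank ℝ (N ⊓ W : Submodule ℝ (Fin n → ℝ)) = 0 := by
      rw [hbot]; exact finrank_bot ℝ _
    have hsum := Submodule.finrank_sup_add_finrank_inf_eq N W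
    have hsup : Module.finrank ℝ (N ⊔ W : Submodule ℝ (Fin n → ℝ)) ≤ n := by
      calc Module.finrank ℝ (N ⊔ W : Submodule ℝ (Fin n → ℝ))
          ≤ Module.finrank ℝ (Fin n → ℝ) := Submodule.finrank_le _
        _ = n := by simp [Module.finrank_pi]
    rw [h0, hWrank] at hsum
    omega
  obtain ⟨v, hvNW, hvne⟩ := hNW
  have hvN : C *ᵥ v = 0 := hvNW.1
  obtain ⟨c, hc⟩ := hvNW.2
  have hcv : (Vt * J) *ᵥ c = v := hc
  set w : Fin n → ℝ := J *ᵥ c with hw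
  have hvw : v = Vt *ᵥ w := by rw [hw, Matrix.mulVec_mulVec, hcv]
  have hwi : ∀ i : Fin n, (k : ℕ) < (i : ℕ) → w i = 0 := by
    intro i hi
    rw [hw]
    show ∑ j, J i j * c j = 0
    apply Finset.sum_eq_zero
    intro j _
    have : ¬ ((i : ℕ) = (j : ℕ)) := by
      have := j.isLt; omega
    simp [hJ, this]
  -- norm computations
  have hnv : l2norm v = l2norm w := by rw [hvw, l2norm_mulVec_of_orth hVt]
  have hAt' : At = Ut * Matrix.diagonal (fun i : Fin n => σt (i : ℕ)) * Vtᵀ := by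
    rw [hAt]
    congr 2
    ext i j
    simp only [Matrix.of_apply, Matrix.diagonal_apply, Fin.val_eq_val]
  have hAv : At *ᵥ v = Ut *ᵥ ((Matrix.diagonal (fun i : Fin n => σt (i : ℕ))) *ᵥ w) := by
    rw [hvw, hAt']
    rw [Matrix.mulVec_mulVec, Matrix.mulVec_mulVec]
    simp only [Matrix.mul_assoc]
    rw [← Matrix.mul_assoc Vtᵀ Vt, hVt, Matrix.one_mul]
    rw [hw, Matrix.mulVec_mulVec, Matrix.mulVec_mulVec, Matrix.mul_assoc]
  have hkey : σt k * l2norm v ≤ l2norm (At *ᵥ v) := by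
    rw [hAv, l2norm_mulVec_of_orth hUt, hnv, l2norm, l2norm]
    have hterm : ∀ i : Fin n, (σt k) ^ 2 * (w i) ^ 2 ≤
        ((Matrix.diagonal (fun i : Fin n => σt (i : ℕ))).mulVec w i) ^ 2 := by
      intro i
      rw [Matrix.mulVec_diagonal, mul_pow]
      by_cases hik : (k : ℕ) < (i : ℕ)
      · rw [hwi i hik]; simp
      · apply mul_le_mul_of_nonneg_right _ (sq_nonneg _)
        have h1 : σt k ≤ σt i := hmono _ _ (by omega)
        have h2 := hpos k
        nlinarith
    calc σt k * Real.sqrt (∑ i, w i ^ 2)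
        = Real.sqrt ((σt k) ^ 2 * ∑ i, w i ^ 2) := by
          rw [Real.sqrt_mul (sq_nonneg _), Real.sqrt_sq (hpos k)]
      _ ≤ Real.sqrt (∑ i, ((Matrix.diagonal (fun i : Fin n => σt (i : ℕ))).mulVec w i) ^ 2) := by
          apply Real.sqrt_le_sqrt
          rw [Finset.mul_sum]
          exact Finset.sum_le_sum fun i _ => hterm i
  -- normalize and conclude
  have hvpos : 0 < l2norm v := l2norm_pos hvne
  set u : Fin n → ℝ := (l2norm v)⁻¹ • v with hu
  have hnu : l2norm u = 1 := by
    rw [hu, l2norm_smul, abs_of_pos (inv_pos.mpr hvpos), inv_mul_cancel₀ (ne_of_gt hvpos)]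
  have hresid : (At - T * C) *ᵥ u = (l2norm v)⁻¹ • (At *ᵥ v) := by
    rw [hu, Matrix.mulVec_smul]
    congr 1
    rw [Matrix.sub_mulVec, ← Matrix.mulVec_mulVec, hvN, Matrix.mulVec_zero, sub_zero]
  have := le_specNorm (At - T * C) u (le_of_eq hnu)
  rw [hresid, l2norm_smul, abs_of_pos (inv_pos.mpr hvpos)] at this
  calc σt k = (l2norm v)⁻¹ * (σt k * l2norm v) := by field_simp
    _ ≤ (l2norm v)⁻¹ * l2norm (At *ᵥ v) := by
        apply mul_le_mul_of_nonneg_left hkey (le_of_lt (inv_pos.mpr hvpos))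
    _ ≤ specNorm (At - T * C) := this

lemma specNorm_sub_le {n d : ℕ} (M N : Matrix (Fin n) (Fin d) ℝ) :
    specNorm (M - N) ≤ specNorm M + specNorm N := by
  rw [specNorm_eq, specNorm_eq, specNorm_eq, toE_sub]; exact norm_sub_le _ _

lemma specNorm_UXV {n : ℕ} {U V : Matrix (Fin n) (Fin n) ℝ} (hU : Uᵀ * U = 1)
    (hV : Vᵀ * V = 1) (X : Matrix (Fin n) (Fin n) ℝ) :
    specNorm (U * X * Vᵀ) = specNorm X := by
  rw [Matrix.mul_assoc, specNorm_orth_mul hU, specNorm_mul_orthT hV]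

lemma resid_norm_le {n k : ℕ} (hkn : k ≤ n) (U V : Matrix (Fin n) (Fin n) ℝ) (σ : ℕ → ℝ)
    (hU : Uᵀ * U = 1) (hV : Vᵀ * V = 1)
    (hmono : ∀ i j : ℕ, i ≤ j → σ j ≤ σ i) (hpos : ∀ i, 0 ≤ σ i)
    (A : Matrix (Fin n) (Fin n) ℝ)
    (hAeq : A = U * (Matrix.of fun (i j : Fin n) =>
      if (i : ℕ) = (j : ℕ) then σ (i : ℕ) else 0) * Vᵀ) :
    specNorm (A - rankApprox k A U hkn) ≤ σ k := by
  rw [resid_eq hkn U V σ hU A hAeq, specNorm_UXV hU hV]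
  apply specNorm_le_of_bound (hpos k)
  intro v
  apply l2norm_smul_le _ _ (hpos k)
  intro i
  by_cases hik : k ≤ (i : ℕ)
  · rw [if_pos hik, abs_of_nonneg (hpos _)]
    exact hmono _ _ hik
  · rw [if_neg hik]
    simpa using hpos k

lemma resid_norm_ge {n k : ℕ} (hkn : k ≤ n) (U V : Matrix (Fin n) (Fin n) ℝ) (σ : ℕ → ℝ)
    (hU : Uᵀ * U = 1) (hV : Vᵀ * V = 1) (hpos : ∀ i, 0 ≤ σ i)
    (hzero : ∀ i, min n n ≤ i → σ i = 0)
    (A : Matrix (Fin n) (Fin n) ℝ)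
    (hAeq : A = U * (Matrix.of fun (i j : Fin n) =>
      if (i : ℕ) = (j : ℕ) then σ (i : ℕ) else 0) * Vᵀ) :
    σ k ≤ specNorm (A - rankApprox k A U hkn) := by
  rcases lt_or_eq_of_le hkn with hlt | heq
  · rw [resid_eq hkn U V σ hU A hAeq, specNorm_UXV hU hV]
    have := diag_single_le_specNorm (fun i : Fin n => if k ≤ (i : ℕ) then σ (i : ℕ) else 0)
      ⟨k, hlt⟩ (by simpa using hpos k)
    simpa using this
  · have : σ k = 0 := hzero k (by omega)
    rw [this]
    exact specNorm_nonneg _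


/-- Lemma `lem:perturbed-correctness`, part 2: if `Ã = A + D` with
`‖D‖₂ ≤ (ε/(3n))·σ_{k+1}(A)` and `Q` has orthonormal columns, then a `(1+ε)` spectral norm
low-rank approximation guarantee for `Ã` implies a `(1+2ε)` guarantee for `A`. -/
theorem perturbed_spectral_norm_guarantee (n k : ℕ) (hk : 1 ≤ k) (hkn : k ≤ n)
    (A D : Matrix (Fin n) (Fin n) ℝ) (ε : ℝ) (hε : ε ∈ Set.Ioo (0 : ℝ) 1)
    (UA VA : Matrix (Fin n) (Fin n) ℝ) (σA : ℕ → ℝ) (hA : IsSVD A UA VA σA)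
    (Ut Vt : Matrix (Fin n) (Fin n) ℝ) (σt : ℕ → ℝ) (ht : IsSVD (A + D) Ut Vt σt)
    (hD : specNorm D ≤ ε / (3 * n) * σA k)
    (Q : Matrix (Fin n) (Fin k) ℝ) (hQ : Qᵀ * Q = 1)
    (h : specNorm ((A + D) - Q * Qᵀ * (A + D)) ≤
        (1 + ε) * specNorm ((A + D) - rankApprox k (A + D) Ut hkn)) :
    specNorm (A - Q * Qᵀ * A) ≤ (1 + 2 * ε) * specNorm (A - rankApprox k A UA hkn) := by
  obtain ⟨hUA, hVA, hmonoA, hposA, hzeroA, hAeq⟩ := hA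
  obtain ⟨hUt, hVt, hmonot, hpost, hzerot, hAteq⟩ := ht
  have hε0 : 0 < ε := hε.1
  have hε1 : ε < 1 := hε.2
  have hn1 : (1 : ℝ) ≤ (n : ℝ) := by
    have : 1 ≤ n := le_trans hk hkn
    exact_mod_cast this
  have hDn : 0 ≤ specNorm D := specNorm_nonneg D
  have hσA : 0 ≤ σA k := hposA k
  -- step 1 : ‖A - QQᵀA‖ ≤ ‖Ã - QQᵀÃ‖ + ‖D‖
  have step1 : specNorm (A - Q * Qᵀ * A) ≤
      specNorm ((A + D) - Q * Qᵀ * (A + D)) + specNorm D := by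
    have e1 : A - Q * Qᵀ * A =
        ((A + D) - Q * Qᵀ * (A + D)) - ((1 - Q * Qᵀ) * D) := by
      noncomm_ring
    rw [e1]
    calc specNorm (((A + D) - Q * Qᵀ * (A + D)) - ((1 - Q * Qᵀ) * D)) ≤
        specNorm ((A + D) - Q * Qᵀ * (A + D)) + specNorm ((1 - Q * Qᵀ) * D) :=
          specNorm_sub_le _ _
      _ ≤ specNorm ((A + D) - Q * Qᵀ * (A + D)) + specNorm D := by
          have h2 : specNorm ((1 - Q * Qᵀ) * D) ≤ specNorm D := by
            calc specNorm ((1 - Q * Qᵀ) * D) ≤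
                specNorm ((1 : Matrix (Fin n) (Fin n) ℝ) - Q * Qᵀ) * specNorm D :=
                  specNorm_mul_le _ _
              _ ≤ 1 * specNorm D :=
                  mul_le_mul_of_nonneg_right (specNorm_proj_le_one hQ) hDn
              _ = specNorm D := one_mul _
          linarith
  -- step 2 : ‖Ã - Ã_k‖ ≤ σt k
  have step2 : specNorm ((A + D) - rankApprox k (A + D) Ut hkn) ≤ σt k :=
    resid_norm_le hkn Ut Vt σt hUt hVt hmonot hpost (A + D) hAteq
  -- step 3 (Weyl) : σt k ≤ ‖Ã - A_k‖
  have step3 : σt k ≤ specNorm ((A + D) - rankApprox k A UA hkn) := by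
    rcases lt_or_eq_of_le hkn with hlt | heq
    · have := weakEY hlt (A + D) Ut Vt σt hUt hVt hmonot hpost hAteq
        (topCols UA hkn) ((topCols UA hkn)ᵀ * A)
      rwa [show topCols UA hkn * ((topCols UA hkn)ᵀ * A) = rankApprox k A UA hkn by
        rw [rankApprox, Matrix.mul_assoc]] at this
    · have hz : σt k = 0 := hzerot k (by omega)
      rw [hz]
      exact specNorm_nonneg _
  -- step 4 : ‖Ã - A_k‖ ≤ σA k + ‖D‖
  have step4 : specNorm ((A + D) - rankApprox k A UA hkn) ≤ σA k + specNorm D := by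
    have e2 : (A + D) - rankApprox k A UA hkn = (A - rankApprox k A UA hkn) + D := by
      abel
    rw [e2]
    calc specNorm ((A - rankApprox k A UA hkn) + D) ≤
        specNorm (A - rankApprox k A UA hkn) + specNorm D := specNorm_add_le _ _
      _ ≤ σA k + specNorm D := by
          have := resid_norm_le hkn UA VA σA hUA hVA hmonoA hposA A hAeq
          linarith
  -- step 5 : σA k ≤ ‖A - A_k‖
  have step5 : σA k ≤ specNorm (A - rankApprox k A UA hkn) :=
    resid_norm_ge hkn UA VA σA hUA hVA hposA hzeroA A hAeq
  -- arithmetic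
  have hchain : specNorm (A - Q * Qᵀ * A) ≤ (1 + ε) * (σA k + specNorm D) + specNorm D := by
    have h1 : specNorm ((A + D) - Q * Qᵀ * (A + D)) ≤ (1 + ε) * (σA k + specNorm D) := by
      calc specNorm ((A + D) - Q * Qᵀ * (A + D)) ≤
          (1 + ε) * specNorm ((A + D) - rankApprox k (A + D) Ut hkn) := h
        _ ≤ (1 + ε) * (σA k + specNorm D) := by
            apply mul_le_mul_of_nonneg_left _ (by linarith)
            linarith [le_trans step3 step4, step2]
    linarith [step1]
  have hfinal : (1 + ε) * (σA k + specNorm D) + specNorm D ≤ (1 + 2 * ε) * σA k := by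
    have hDε : specNorm D ≤ ε / 3 * σA k := by
      have h3 : ε / (3 * n) ≤ ε / 3 := by
        apply div_le_div_of_nonneg_left (le_of_lt hε0) (by norm_num) (by linarith)
      calc specNorm D ≤ ε / (3 * n) * σA k := hD
        _ ≤ ε / 3 * σA k := mul_le_mul_of_nonneg_right h3 hσA
    nlinarith [hσA, hDn, hε0, hε1, hDε]
  calc specNorm (A - Q * Qᵀ * A) ≤ (1 + 2 * ε) * σA k := le_trans hchain hfinal
    _ ≤ (1 + 2 * ε) * specNorm (A - rankApprox k A UA hkn) := by
        apply mul_le_mul_of_nonneg_left step5 (by linarith)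


end
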